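/- arXiv:1607.08907 — 3 statements merged into one kernel-verified Lean document; each statement's English description precedes it below -/
import Mathlib

section
/- Let p be an odd prime, let F = ⟨x, y ∣ x^p, y^p⟩ be the free product of two cyclic groups of order p, and let i = k(p−1)+1 for some k ≥ 1. Put H = F/γ_{i+1}(F) and let u, v be the images of x, y in H. Then the set of commutators {[u,h] : h ∈ H} does not contain the subgroup γ_i(H), and likewise the set {[v,h] : h ∈ H} does not contain γ_i(H); that is, there exist w, z ∈ γ_i(H) with w ∉ {[u,h] : h ∈ H} and z ∉ {[v,h] : h ∈ H}. -/
/-- The cyclic group of order `p`. -/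
abbrev Cp (p : ℕ) := Multiplicative (ZMod p)

/-- The free product `C_p ∗ C_p` of two cyclic groups of order `p`. -/
abbrev FP (p : ℕ) := Monoid.Coprod (Cp p) (Cp p)

/-- The canonical generator `x` of the first free factor. -/
def xgen (p : ℕ) : FP p := Monoid.Coprod.inl (Multiplicative.ofAdd (1 : ZMod p))

/-- The canonical generator `y` of the second free factor. -/
def ygen (p : ℕ) : FP p := Monoid.Coprod.inr (Multiplicative.ofAdd (1 : ZMod p))

/-!
Send `x` and `y` to `1 + S₁` and `1 + S₀`, where `S_e` is the subdiagonal shift on `Fin (i + 1)`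
over `ZMod p` supported on the columns of parity `e`. As `S_e ^ 2 = 0` these matrices have order
`p`, and the lower central series of the image lies in the congruence filtration
`Γ_m = {g | g - 1 vanishes above the m-th subdiagonal}`, so the representation factors through
`H`. To first order the left-normed commutator `w = [y, x, y, x, …]` of weight `i` becomes the
iterated Lie bracket of the `S_e`, which is `2 ^ ((i - 1) / 2)` times the matrix unit `E_{i,0}`.
If `[u, h] = w` and `P` is the (unitriangular) image of `h`, then `S₁ P - P S₁ = 2 ^ ((i - 1) / 2)
E_{i,0}`. Since `i` is odd, row `i` and column `0` of `S₁` vanish, so the `(i, 0)` entry of the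
left side is `0`, while `2` is a unit mod `p`. Swapping `x` and `y` gives the second claim.
-/

open scoped commutatorElement

def unipotentHom {R A : Type*} [CommSemiring R] [Semiring A] [Algebra R A] (N : A)
    (hN : N * N = 0) : Multiplicative R →* A where
  toFun a := 1 + a.toAdd • N
  map_one' := by simp
  map_mul' a b := by
    simp only [toAdd_mul, add_smul, add_mul, mul_add, mul_one, one_mul, smul_mul_smul, hN,
      smul_zero, add_zero]
    abel

lemma unipotentHom_apply {R A : Type*} [CommSemiring R] [Semiring A] [Algebra R A] (N : A)
    (hN : N * N = 0) (a : Multiplicative R) : unipotentHom N hN a = 1 + a.toAdd • N := rfl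

def alternatingCommutator {G : Type*} [Group G] (a b : G) : ℕ → G
  | 0 => b
  | t + 1 => ⁅alternatingCommutator a b t, if t % 2 = 0 then a else b⁆

lemma alternatingCommutator_mem_lowerCentralSeries {G : Type*} [Group G] (a b : G) (t : ℕ) :
    alternatingCommutator a b t ∈ (⊤ : Subgroup G).lowerCentralSeries t := by
  induction t with
  | zero => trivial
  | succ t ih => exact Subgroup.commutator_mem_commutator ih (Subgroup.mem_top _)

namespace Matrix

variable {R : Type*} {n : ℕ}

local notation "𝕄" => Matrix (Fin n) (Fin n) R

section Ring

variable [Ring R]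

variable (R n) in
def subdiagFilt (m : ℕ) : Submodule R 𝕄 where
  carrier := {M | ∀ r c : Fin n, (r : ℕ) < c + m → M r c = 0}
  add_mem' hM hN r c h := by simp [hM r c h, hN r c h]
  zero_mem' _ _ _ := rfl
  smul_mem' a _ hM r c h := by simp [hM r c h]

lemma subdiagFilt_antitone : Antitone (subdiagFilt R n) :=
  fun _ _ hst _ hM r c h => hM r c (by omega)

lemma one_mem_subdiagFilt_zero : (1 : 𝕄) ∈ subdiagFilt R n 0 :=
  fun _ _ h => one_apply_ne (Fin.ne_of_lt h)

lemma mul_mem_subdiagFilt {s t : ℕ} {M N : 𝕄}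
    (hM : M ∈ subdiagFilt R n s) (hN : N ∈ subdiagFilt R n t) :
    M * N ∈ subdiagFilt R n (s + t) := by
  intro r c h
  refine (mul_apply (M := M)).trans (Finset.sum_eq_zero fun j _ => ?_)
  by_cases hj : (r : ℕ) < j + s
  · rw [hM r j hj, zero_mul]
  · rw [hN j c (by omega), mul_zero]

lemma lie_mem_subdiagFilt {s t : ℕ} {M N : 𝕄}
    (hM : M ∈ subdiagFilt R n s) (hN : N ∈ subdiagFilt R n t) :
    ⁅M, N⁆ ∈ subdiagFilt R n (s + t) := by
  rw [Ring.lie_def]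
  exact sub_mem (mul_mem_subdiagFilt hM hN) (add_comm t s ▸ mul_mem_subdiagFilt hN hM)

lemma eq_zero_of_mem_subdiagFilt {m : ℕ} (hm : n ≤ m) {M : 𝕄}
    (hM : M ∈ subdiagFilt R n m) : M = 0 :=
  ext fun r c => hM r c (by omega)

lemma mul_eq_right_of_mem_subdiagFilt {m : ℕ} (hm : n ≤ m + 1) {M W : 𝕄}
    (hM : M - 1 ∈ subdiagFilt R n 1) (hW : W ∈ subdiagFilt R n m) : M * W = W := by
  have h := eq_zero_of_mem_subdiagFilt (by omega) (mul_mem_subdiagFilt hM hW)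
  rwa [sub_mul, one_mul, sub_eq_zero] at h

lemma lie_eq_of_one_add_mul_eq {m : ℕ} (hm : n ≤ m + 1) {A P W : 𝕄}
    (hA : A ∈ subdiagFilt R n 1) (hP : P - 1 ∈ subdiagFilt R n 1) (hW : W ∈ subdiagFilt R n m)
    (h : (1 + A) * P = P * (1 + A) * (1 + W)) : ⁅A, P⁆ = W := by
  have hPA : P * (1 + A) - 1 ∈ subdiagFilt R n 1 := by
    have e : P * (1 + A) - 1 = (P - 1) * A + A + (P - 1) := by noncomm_ring
    rw [e]
    exact add_mem (add_mem (subdiagFilt_antitone (by omega) (mul_mem_subdiagFilt hP hA)) hA) hP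
  rw [mul_add, mul_one, mul_eq_right_of_mem_subdiagFilt hm hPA hW] at h
  have e : ⁅A, P⁆ = (1 + A) * P - P * (1 + A) := by rw [Ring.lie_def]; noncomm_ring
  rw [e, h, add_sub_cancel_left]

lemma lie_apply_eq_zero {m : Type*} [Fintype m] {A P : Matrix m m R} {r c : m}
    (hrow : ∀ j, A r j = 0) (hcol : ∀ j, A j c = 0) : ⁅A, P⁆ r c = 0 := by
  simp [Ring.lie_def, mul_apply, hrow, hcol]

def subdiag (d : ℕ) : (ℕ → R) →ₗ[R] 𝕄 where
  toFun f := of fun r c => if (r : ℕ) = c + d then f c else 0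
  map_add' f g := by ext r c; simp only [of_apply, add_apply]; split_ifs <;> simp
  map_smul' a f := by ext r c; simp only [of_apply, smul_apply]; split_ifs <;> simp

lemma subdiag_apply (d : ℕ) (f : ℕ → R) (r c : Fin n) :
    subdiag d f r c = if (r : ℕ) = c + d then f c else 0 := rfl

lemma subdiag_mem_subdiagFilt (d : ℕ) (f : ℕ → R) : (subdiag d f : 𝕄) ∈ subdiagFilt R n d :=
  fun r c h => if_neg (by omega)

lemma subdiag_mul_subdiag (d e : ℕ) (f g : ℕ → R) :
    (subdiag d f * subdiag e g : 𝕄) = subdiag (d + e) (fun c => f (c + e) * g c) := by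
  ext r c
  simp only [mul_apply, subdiag_apply, mul_ite, ite_mul, zero_mul, mul_zero]
  rw [Fin.sum_univ_eq_sum_range
    (fun j => if j = c + e then if (r : ℕ) = j + d then f j * g c else 0 else 0),
    Finset.sum_ite_eq']
  simp only [Finset.mem_range]
  split_ifs <;> first | rfl | omega

def parityShift (e : ℕ) : 𝕄 := subdiag 1 fun c => if c % 2 = e % 2 then 1 else 0

lemma parityShift_congr {e e' : ℕ} (h : e % 2 = e' % 2) :
    (parityShift e : 𝕄) = parityShift e' := by
  simp only [parityShift, h]

lemma parityShift_mem_subdiagFilt (e : ℕ) : (parityShift e : 𝕄) ∈ subdiagFilt R n 1 :=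
  subdiag_mem_subdiagFilt _ _

lemma parityShift_mul_self (e : ℕ) : (parityShift e * parityShift e : 𝕄) = 0 := by
  rw [parityShift, subdiag_mul_subdiag, ← map_zero (subdiag (R := R) (n := n) 2)]
  congr 1; funext c
  split_ifs <;> first | omega | simp

end Ring

variable [CommRing R]

lemma inv_mem_subdiagFilt_zero {g : GL (Fin n) R} (hg : (g : 𝕄) ∈ subdiagFilt R n 0) :
    (↑g⁻¹ : 𝕄) ∈ subdiagFilt R n 0 := by
  let := g.invertible
  rw [coe_units_inv]
  have : BlockTriangular (g : 𝕄) OrderDual.toDual := fun r c h => hg r c h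
  exact fun r c h => blockTriangular_inv_of_blockTriangular this h

variable (R n) in
def unipotentFilt (m : ℕ) : Subgroup (GL (Fin n) R) where
  carrier := {g | (g : 𝕄) - 1 ∈ subdiagFilt R n m}
  one_mem' := by simp [zero_mem]
  mul_mem' {g h} hg hh := by
    have e : (↑(g * h) : 𝕄) - 1 = (g - 1) * (h - 1) + (g - 1) + (h - 1) := by
      rw [Units.val_mul]; noncomm_ring
    change _ ∈ subdiagFilt R n m
    rw [e]
    exact add_mem (add_mem (subdiagFilt_antitone le_add_self (mul_mem_subdiagFilt hg hh)) hg) hh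
  inv_mem' {g} hg := by
    have hg0 : (g : 𝕄) ∈ subdiagFilt R n 0 := by
      rw [← sub_add_cancel (g : 𝕄) 1]
      exact add_mem (subdiagFilt_antitone (Nat.zero_le _) hg) one_mem_subdiagFilt_zero
    have e : (↑g⁻¹ : 𝕄) - 1 = -((↑g⁻¹ : 𝕄) * (g - 1)) := by
      rw [mul_sub, ← Units.val_mul, inv_mul_cancel, Units.val_one, mul_one]; abel
    change _ ∈ subdiagFilt R n m
    rw [e]
    exact neg_mem (by simpa using mul_mem_subdiagFilt (inv_mem_subdiagFilt_zero hg0) hg)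

lemma mem_unipotentFilt {m : ℕ} {g : GL (Fin n) R} :
    g ∈ unipotentFilt R n m ↔ (g : 𝕄) - 1 ∈ subdiagFilt R n m := Iff.rfl

lemma commutator_sub_one_sub_lie_mem {s t : ℕ} {g h : GL (Fin n) R}
    (hg : g ∈ unipotentFilt R n (s + 1)) (hh : h ∈ unipotentFilt R n (t + 1)) :
    (↑⁅g, h⁆ : 𝕄) - 1 - ⁅(g : 𝕄) - 1, (h : 𝕄) - 1⁆ ∈ subdiagFilt R n (s + t + 3) := by
  have e : (↑⁅g, h⁆ : 𝕄) - 1 - ⁅(g : 𝕄) - 1, (h : 𝕄) - 1⁆ =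
      ⁅(g : 𝕄) - 1, (h : 𝕄) - 1⁆ * ((↑(g⁻¹ * h⁻¹) : 𝕄) - 1) := by
    have hg' : (g : 𝕄) * (↑g⁻¹ : 𝕄) = 1 := by rw [← Units.val_mul, mul_inv_cancel, Units.val_one]
    have hh' : (h : 𝕄) * (↑h⁻¹ : 𝕄) = 1 := by rw [← Units.val_mul, mul_inv_cancel, Units.val_one]
    have hXY : ⁅(g : 𝕄) - 1, (h : 𝕄) - 1⁆ = g * h - h * g := by rw [Ring.lie_def]; noncomm_ring
    rw [hXY, commutatorElement_def, Units.val_mul, Units.val_mul, Units.val_mul, Units.val_mul]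
    calc _ = (g : 𝕄) * h * ↑g⁻¹ * ↑h⁻¹ - h * (g * ↑g⁻¹) * ↑h⁻¹ - (g * h - h * g) := by
          rw [hg', mul_one, hh']
      _ = _ := by noncomm_ring
  have hgh : g⁻¹ * h⁻¹ ∈ unipotentFilt R n 1 :=
    mul_mem (inv_mem (subdiagFilt_antitone (by omega) hg))
      (inv_mem (subdiagFilt_antitone (by omega) hh))
  rw [e]
  exact subdiagFilt_antitone (by omega) (mul_mem_subdiagFilt (lie_mem_subdiagFilt hg hh) hgh)

lemma commutator_unipotentFilt_le (s t : ℕ) :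
    ⁅unipotentFilt R n (s + 1), unipotentFilt R n (t + 1)⁆ ≤ unipotentFilt R n (s + t + 2) := by
  rw [Subgroup.commutator_le]
  intro g hg h hh
  rw [mem_unipotentFilt, ← sub_add_cancel (_ - 1) ⁅(g : 𝕄) - 1, (h : 𝕄) - 1⁆]
  exact add_mem (subdiagFilt_antitone (by omega) (commutator_sub_one_sub_lie_mem hg hh))
    (subdiagFilt_antitone (by omega) (lie_mem_subdiagFilt hg hh))

lemma lowerCentralSeries_le_unipotentFilt {S : Subgroup (GL (Fin n) R)}
    (hS : S ≤ unipotentFilt R n 1) (t : ℕ) :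
    S.lowerCentralSeries t ≤ unipotentFilt R n (t + 1) := by
  induction t with
  | zero => exact hS
  | succ t ih => exact (Subgroup.commutator_mono ih hS).trans (commutator_unipotentFilt_le t 0)

lemma lowerCentralSeries_le_ker {G : Type*} [Group G] {ψ : G →* GL (Fin n) R}
    (hψ : ψ.range ≤ unipotentFilt R n 1) {m : ℕ} (hm : n ≤ m + 1) :
    (⊤ : Subgroup G).lowerCentralSeries m ≤ ψ.ker := by
  intro g hg
  have hg' : ψ g ∈ unipotentFilt R n (m + 1) := by
    refine lowerCentralSeries_le_unipotentFilt hψ m ?_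
    rw [MonoidHom.range_eq_map, ← Subgroup.map_lowerCentralSeries]
    exact Subgroup.mem_map_of_mem ψ hg
  exact Units.ext (sub_eq_zero.mp (eq_zero_of_mem_subdiagFilt hm hg'))

lemma range_unipotentHom_le {N : 𝕄} (hN : N * N = 0) (hN1 : N ∈ subdiagFilt R n 1) :
    (unipotentHom (R := R) N hN).toHomUnits.range ≤ unipotentFilt R n 1 := by
  rintro _ ⟨a, rfl⟩
  rw [mem_unipotentFilt, MonoidHom.coe_toHomUnits, unipotentHom_apply, add_sub_cancel_left]
  exact Submodule.smul_mem _ _ hN1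

def alternatingCoeff (t c : ℕ) : R :=
  if t % 2 = 0 then (if c % 2 = 0 then 1 else 0) else (if c % 2 = 0 then -1 else 1)

variable (R n) in
def alternatingLie : ℕ → 𝕄
  | 0 => parityShift 0
  | t + 1 => ⁅alternatingLie t, parityShift (t + 1)⁆

lemma alternatingLie_eq (t : ℕ) :
    alternatingLie R n t = (2 : R) ^ (t / 2) • subdiag (t + 1) (alternatingCoeff t) := by
  induction t with
  | zero =>
    rw [alternatingLie, pow_zero, one_smul, parityShift]
    exact congrArg (subdiag 1) (funext fun c => by simp [alternatingCoeff])
  | succ t ih =>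
    rw [alternatingLie, ih, Ring.lie_def, smul_mul_assoc, mul_smul_comm, ← smul_sub, parityShift,
      subdiag_mul_subdiag, subdiag_mul_subdiag, add_comm 1, ← map_sub, ← map_smul, ← map_smul]
    congr 1; funext c
    simp only [alternatingCoeff, Pi.smul_apply, Pi.sub_apply, smul_eq_mul]
    split_ifs <;> first
      | (exfalso; omega)
      | (rw [show (t + 1) / 2 = t / 2 from by omega]; ring)
      | (rw [show (t + 1) / 2 = t / 2 + 1 from by omega]; ring)

lemma alternatingLie_mem_subdiagFilt (t : ℕ) :
    alternatingLie R n t ∈ subdiagFilt R n (t + 1) := by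
  rw [alternatingLie_eq]
  exact Submodule.smul_mem _ _ (subdiag_mem_subdiagFilt _ _)

lemma alternatingLie_apply_last_zero {i : ℕ} (hi : Odd i) :
    alternatingLie R (i + 1) (i - 1) (Fin.last i) 0 = 2 ^ ((i - 1) / 2) := by
  have hi2 : i % 2 = 1 := Nat.odd_iff.mp hi
  simp [alternatingLie_eq, subdiag_apply, alternatingCoeff, show (i - 1) % 2 = 0 by omega,
    Nat.sub_add_cancel hi.pos]

lemma alternatingCommutator_sub_alternatingLie_mem {G : Type*} [Group G] (ψ : G →* GL (Fin n) R)
    {a b : G} (ha : (ψ a : 𝕄) = 1 + parityShift 1) (hb : (ψ b : 𝕄) = 1 + parityShift 0)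
    (t : ℕ) :
    (ψ (alternatingCommutator a b t) : 𝕄) - 1 - alternatingLie R n t ∈
      subdiagFilt R n (t + 2) := by
  induction t with
  | zero => simp [alternatingCommutator, alternatingLie, hb, zero_mem]
  | succ t ih =>
    set g := ψ (alternatingCommutator a b t)
    set h := ψ (if t % 2 = 0 then a else b)
    have hh : (h : 𝕄) - 1 = parityShift (t + 1) := by
      unfold h
      split_ifs
      · rw [ha, add_sub_cancel_left]; exact parityShift_congr (by omega)
      · rw [hb, add_sub_cancel_left]; exact parityShift_congr (by omega)
    have hg : g ∈ unipotentFilt R n (t + 1) := by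
      rw [mem_unipotentFilt, ← sub_add_cancel ((g : 𝕄) - 1) (alternatingLie R n t)]
      exact add_mem (subdiagFilt_antitone (by omega) ih) (alternatingLie_mem_subdiagFilt t)
    have hh1 : h ∈ unipotentFilt R n (0 + 1) := by
      rw [mem_unipotentFilt, hh]; exact parityShift_mem_subdiagFilt _
    have e : (↑⁅g, h⁆ : 𝕄) - 1 - alternatingLie R n (t + 1) =
        ((↑⁅g, h⁆ : 𝕄) - 1 - ⁅(g : 𝕄) - 1, (h : 𝕄) - 1⁆) +
          ⁅(g : 𝕄) - 1 - alternatingLie R n t, parityShift (t + 1)⁆ := by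
      simp only [alternatingLie, hh, Ring.lie_def]; noncomm_ring
    rw [alternatingCommutator, map_commutatorElement, e]
    exact add_mem (commutator_sub_one_sub_lie_mem hg hh1)
      (lie_mem_subdiagFilt (t := 1) ih (parityShift_mem_subdiagFilt _))

theorem exists_mem_lowerCentralSeries_forall_commutator_ne {G : Type*} [Group G] [Nontrivial R]
    (h2 : IsUnit (2 : R)) {i : ℕ} (hi : Odd i) (ψ : G →* GL (Fin (i + 1)) R)
    (hψ : ψ.range ≤ unipotentFilt R (i + 1) 1) {a b : G}
    (ha : (ψ a : Matrix (Fin (i + 1)) (Fin (i + 1)) R) = 1 + parityShift 1)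
    (hb : (ψ b : Matrix (Fin (i + 1)) (Fin (i + 1)) R) = 1 + parityShift 0) :
    ∃ w ∈ (⊤ : Subgroup (G ⧸ (⊤ : Subgroup G).lowerCentralSeries i)).lowerCentralSeries (i - 1),
      ∀ h : G ⧸ (⊤ : Subgroup G).lowerCentralSeries i,
        (QuotientGroup.mk a : G ⧸ (⊤ : Subgroup G).lowerCentralSeries i)⁻¹ * h⁻¹ *
          QuotientGroup.mk a * h ≠ w := by
  have hi2 : i % 2 = 1 := Nat.odd_iff.mp hi
  set N := (⊤ : Subgroup G).lowerCentralSeries i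
  have hker : N ≤ ψ.ker := lowerCentralSeries_le_ker hψ le_rfl
  set w := alternatingCommutator a b (i - 1)
  have hw : (ψ w : Matrix (Fin (i + 1)) (Fin (i + 1)) R) - 1 = alternatingLie R _ (i - 1) :=
    sub_eq_zero.mp (eq_zero_of_mem_subdiagFilt (by omega)
      (alternatingCommutator_sub_alternatingLie_mem ψ ha hb (i - 1)))
  refine ⟨w, ?_, fun h heq => ?_⟩
  · have hmem := Subgroup.mem_map_of_mem (QuotientGroup.mk' N)
      (alternatingCommutator_mem_lowerCentralSeries a b (i - 1))
    rw [Subgroup.map_lowerCentralSeries] at hmem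
    exact Subgroup.lowerCentralSeries_mono _ le_top hmem
  obtain ⟨q, rfl⟩ := QuotientGroup.mk_surjective h
  have hgrp : ψ a * ψ q = ψ q * ψ a * ψ w := by
    have := congrArg (QuotientGroup.lift N ψ hker) heq
    simp only [map_mul, map_inv, QuotientGroup.lift_mk] at this
    rw [← this]; group
  have hlie : ⁅(parityShift 1 : Matrix (Fin (i + 1)) (Fin (i + 1)) R),
      (ψ q : Matrix (Fin (i + 1)) (Fin (i + 1)) R)⁆ = alternatingLie R _ (i - 1) := by
    refine lie_eq_of_one_add_mul_eq (by omega) (parityShift_mem_subdiagFilt _) (hψ ⟨q, rfl⟩)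
      (alternatingLie_mem_subdiagFilt _) ?_
    rw [← ha, ← hw, add_sub_cancel, ← Units.val_mul, ← Units.val_mul, ← Units.val_mul, hgrp]
  have hrow (j : Fin (i + 1)) : (parityShift 1 : Matrix (Fin (i + 1)) (Fin (i + 1)) R)
      (Fin.last i) j = 0 := by
    simp only [parityShift, subdiag_apply, Nat.mod_succ, Fin.val_last, ite_eq_right_iff,
      one_ne_zero, imp_false, Nat.mod_two_not_eq_one]
    omega
  have hcol (j : Fin (i + 1)) : (parityShift 1 : Matrix (Fin (i + 1)) (Fin (i + 1)) R) j 0 = 0 := by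
    simp [parityShift, subdiag_apply]
  have hentry := congrFun (congrFun hlie (Fin.last i)) 0
  rw [lie_apply_eq_zero hrow hcol, alternatingLie_apply_last_zero hi] at hentry
  exact (h2.pow _).ne_zero hentry.symm

end Matrix

open Matrix

def parityShiftRep (p n e₁ e₂ : ℕ) : FP p →* GL (Fin n) (ZMod p) :=
  Monoid.Coprod.lift (unipotentHom (parityShift e₁) (parityShift_mul_self e₁)).toHomUnits
    (unipotentHom (parityShift e₂) (parityShift_mul_self e₂)).toHomUnits

lemma parityShiftRep_range_le (p n e₁ e₂ : ℕ) :
    (parityShiftRep p n e₁ e₂).range ≤ unipotentFilt (ZMod p) n 1 := by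
  rw [parityShiftRep, Monoid.Coprod.range_lift]
  exact sup_le (range_unipotentHom_le _ (parityShift_mem_subdiagFilt e₁))
    (range_unipotentHom_le _ (parityShift_mem_subdiagFilt e₂))

lemma parityShiftRep_xgen (p n e₁ e₂ : ℕ) :
    (parityShiftRep p n e₁ e₂ (xgen p) : Matrix (Fin n) (Fin n) (ZMod p)) = 1 + parityShift e₁ := by
  simp [parityShiftRep, xgen, unipotentHom_apply]

lemma parityShiftRep_ygen (p n e₁ e₂ : ℕ) :
    (parityShiftRep p n e₁ e₂ (ygen p) : Matrix (Fin n) (Fin n) (ZMod p)) = 1 + parityShift e₂ := by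
  simp [parityShiftRep, ygen, unipotentHom_apply]

/-- `γ_{i+1}(F)` is `lowerCentralSeries i` and `γ_i(H)` is `lowerCentralSeries (i - 1)`. -/
theorem commutators_do_not_cover_general (p : ℕ) (hp : p.Prime) (hodd : Odd p)
    (k : ℕ) (i : ℕ) (hi : i = k * (p - 1) + 1) :
    (∃ w ∈ (⊤ : Subgroup (FP p ⧸ (⊤ : Subgroup (FP p)).lowerCentralSeries i)).lowerCentralSeries (i - 1),
      ∀ h : FP p ⧸ (⊤ : Subgroup (FP p)).lowerCentralSeries i,
        (QuotientGroup.mk (xgen p) : FP p ⧸ (⊤ : Subgroup (FP p)).lowerCentralSeries i)⁻¹ * h⁻¹ *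
          QuotientGroup.mk (xgen p) * h ≠ w) ∧
    (∃ z ∈ (⊤ : Subgroup (FP p ⧸ (⊤ : Subgroup (FP p)).lowerCentralSeries i)).lowerCentralSeries (i - 1),
      ∀ h : FP p ⧸ (⊤ : Subgroup (FP p)).lowerCentralSeries i,
        (QuotientGroup.mk (ygen p) : FP p ⧸ (⊤ : Subgroup (FP p)).lowerCentralSeries i)⁻¹ * h⁻¹ *
          QuotientGroup.mk (ygen p) * h ≠ z) := by
  have : Fact (1 < p) := ⟨hp.one_lt⟩
  have h2 : IsUnit (2 : ZMod p) := by
    exact_mod_cast (ZMod.isUnit_iff_coprime 2 p).mpr (Nat.coprime_two_left.mpr hodd)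
  have hi_odd : Odd i := hi ▸ ((Nat.Odd.sub_odd hodd odd_one).mul_left k).add_one
  exact ⟨exists_mem_lowerCentralSeries_forall_commutator_ne h2 hi_odd _
      (parityShiftRep_range_le p _ 1 0) (parityShiftRep_xgen p _ 1 0) (parityShiftRep_ygen p _ 1 0),
    exists_mem_lowerCentralSeries_forall_commutator_ne h2 hi_odd _
      (parityShiftRep_range_le p _ 0 1) (parityShiftRep_ygen p _ 0 1) (parityShiftRep_xgen p _ 0 1)⟩

/-- Let `p` be an odd prime, `F = ⟨x, y ∣ x^p, y^p⟩`, `i = k(p-1)+1` with `k ≥ 1`,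
and `H = F/γ_{i+1}(F)` (note `γ_{i+1}(F) = lowerCentralSeries F i` and
`γ_i(H) = lowerCentralSeries H (i-1)`), with `u, v` the images of `x, y`.
Then the commutator sets `{[u,h] : h ∈ H}` and `{[v,h] : h ∈ H}` do not cover `γ_i(H)`:
there are `w, z ∈ γ_i(H)` avoiding them. -/
theorem commutators_do_not_cover (p : ℕ) (hp : p.Prime) (hodd : Odd p)
    (k : ℕ) (hk : 1 ≤ k) (i : ℕ) (hi : i = k * (p - 1) + 1) :
    (∃ w ∈ (⊤ : Subgroup (FP p ⧸ (⊤ : Subgroup (FP p)).lowerCentralSeries i)).lowerCentralSeries (i - 1),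
      ∀ h : FP p ⧸ (⊤ : Subgroup (FP p)).lowerCentralSeries i,
        (QuotientGroup.mk (xgen p) : FP p ⧸ (⊤ : Subgroup (FP p)).lowerCentralSeries i)⁻¹ * h⁻¹ *
          QuotientGroup.mk (xgen p) * h ≠ w) ∧
    (∃ z ∈ (⊤ : Subgroup (FP p ⧸ (⊤ : Subgroup (FP p)).lowerCentralSeries i)).lowerCentralSeries (i - 1),
      ∀ h : FP p ⧸ (⊤ : Subgroup (FP p)).lowerCentralSeries i,
        (QuotientGroup.mk (ygen p) : FP p ⧸ (⊤ : Subgroup (FP p)).lowerCentralSeries i)⁻¹ * h⁻¹ *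
          QuotientGroup.mk (ygen p) * h ≠ z) :=
  commutators_do_not_cover_general p hp hodd k i hi
end

section
/- Let p be a prime and let G be a finite non-cyclic p-group generated by two elements a and b, where a has order p. Then the union of all conjugates of ⟨a⟩ intersects the union of all conjugates of ⟨b⟩ trivially; that is, for all g, h ∈ G, ⟨a⟩^g ∩ ⟨b⟩^h = 1. -/
/-!
If `⟨a⟩^g ∩ ⟨b⟩^h` were nontrivial, then, `⟨a⟩` having prime order, `⟨a⟩^g ≤ ⟨b⟩^h`, so `a`
lies in the normal closure of `b`, which therefore contains `⟨a, b⟩ = G`. But `⟨b⟩` is proper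
since `G` is not cyclic, and in a finite nilpotent group every proper subgroup lies in a maximal
subgroup, which is normal; so the normal closure of `b` is proper.
-/

open Subgroup

namespace Subgroup

variable {G : Type*} [Group G]

theorem normalClosure_ne_top_of_closure_ne_top [IsCoatomic (Subgroup G)] [Group.IsNilpotent G]
    {s : Set G} (hs : closure s ≠ ⊤) : normalClosure s ≠ ⊤ := by
  obtain ⟨M, hM, hsM⟩ := (eq_top_or_exists_le_coatom (closure s)).resolve_left hs
  have : M.Normal := Group.normalizerCondition_of_isNilpotent.normal_of_coatom M hM
  exact ne_top_of_le_ne_top hM.1 (normalClosure_le_normal (subset_closure.trans hsM))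

theorem le_of_prime_card_of_inf_ne_bot {H K : Subgroup G} (hH : (Nat.card H).Prime)
    (hHK : H ⊓ K ≠ ⊥) : H ≤ K := by
  have : Finite H := Nat.finite_of_card_ne_zero hH.ne_zero
  rcases (Nat.dvd_prime hH).mp (card_dvd_of_le (inf_le_left : H ⊓ K ≤ H)) with h1 | hp
  · exact absurd (card_eq_one.mp h1) hHK
  · exact inf_eq_left.mp (eq_of_le_of_card_ge inf_le_left hp.ge)

theorem mem_normalClosure_singleton_of_conj_mem_zpowers_conj {a b g h : G}
    (hab : g⁻¹ * a * g ∈ zpowers (h⁻¹ * b * h)) : a ∈ normalClosure {b} := by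
  have hN := normalClosure_normal (s := {b})
  have hconj_b : h⁻¹ * b * h ∈ normalClosure {b} := hN.conj_mem' b (subset_normalClosure rfl) h
  simpa [mul_assoc] using hN.conj_mem _ (zpowers_le.mpr hconj_b hab) g

end Subgroup

/-- If `G` is a finite non-cyclic `p`-group generated by `a` and `b`, where `a` has
order `p`, then any conjugate of `⟨a⟩` meets any conjugate of `⟨b⟩` trivially
(note `⟨a⟩^g = ⟨g⁻¹ a g⟩`). -/
theorem conj_zpowers_inter_trivial (p : ℕ) (hp : p.Prime)
    {G : Type*} [Group G] [Finite G] (hG : IsPGroup p G) (hnc : ¬ IsCyclic G)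
    (a b : G) (hgen : Subgroup.closure {a, b} = ⊤) (ha : orderOf a = p) :
    ∀ g h : G,
      Subgroup.zpowers (g⁻¹ * a * g) ⊓ Subgroup.zpowers (h⁻¹ * b * h) = ⊥ := by
  intro g h
  by_contra hne
  have hord : orderOf (g⁻¹ * a * g) = p := by
    rw [← ha]
    exact SemiconjBy.orderOf_eq g (by simp [SemiconjBy, mul_assoc])
  have hle := le_of_prime_card_of_inf_ne_bot (by rwa [Nat.card_zpowers, hord]) hne
  have haN : a ∈ normalClosure {b} :=
    mem_normalClosure_singleton_of_conj_mem_zpowers_conj (hle (mem_zpowers _))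
  have hbN : b ∈ normalClosure {b} := subset_normalClosure rfl
  have hb : closure {b} ≠ ⊤ := fun htop =>
    hnc (isCyclic_iff_exists_zpowers_eq_top.mpr ⟨b, zpowers_eq_closure b ▸ htop⟩)
  have : Fact p.Prime := ⟨hp⟩
  have := hG.isNilpotent
  refine normalClosure_ne_top_of_closure_ne_top hb ?_
  rw [eq_top_iff, ← hgen, closure_le, Set.insert_subset_iff, Set.singleton_subset_iff]
  exact ⟨haN, hbN⟩
end

section
/- Let p be a prime, let G be a finite p-group, and let x ∈ G \ Φ(G) be an element of order p, where Φ(G) is the Frattini subgroup of G. If t ∈ Φ(G) and t is not of the form [x,g] for any g ∈ G, then the union of all conjugates of ⟨x⟩ intersects the union of all conjugates of ⟨xt⟩ trivially; that is, for all g, h ∈ G, ⟨x⟩^g ∩ ⟨xt⟩^h = 1. -/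
/-!
Modulo the Frattini subgroup, which contains all commutators, both `g⁻¹ x g` and `h⁻¹ (x t) h`
map to the image of `x`, an element of order `p`. If the two cyclic subgroups met nontrivially,
the one of prime order would lie in the other; comparing exponents modulo `p` in `G ⧸ Φ(G)` then
forces the two generators to be equal, i.e. `t = [x, g h⁻¹]`.
-/

open Subgroup

section Frattini

variable {G : Type*} [Group G]

theorem QuotientGroup.isCyclic_of_isCoatom {M : Subgroup G} [M.Normal] (hM : IsCoatom M) :
    IsCyclic (G ⧸ M) := by
  obtain ⟨g, -, hg⟩ := SetLike.exists_of_lt hM.1.lt_top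
  have hlt : M < (zpowers (g : G ⧸ M)).comap (QuotientGroup.mk' M) := by
    refine SetLike.lt_iff_le_and_exists.mpr ⟨fun m hm => ?_, g, mem_zpowers _, hg⟩
    simp [(QuotientGroup.eq_one_iff m).mpr hm]
  refine ⟨g, fun y => ?_⟩
  obtain ⟨z, rfl⟩ := QuotientGroup.mk_surjective y
  have hz : z ∈ (zpowers (g : G ⧸ M)).comap (QuotientGroup.mk' M) := (hM.2 _ hlt) ▸ mem_top z
  exact mem_zpowers_iff.mp hz

theorem commutator_le_frattini [Group.IsNilpotent G] : commutator G ≤ frattini G := by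
  refine le_iInf₂ fun M hM => ?_
  have := NormalizerCondition.normal_of_coatom M Group.normalizerCondition_of_isNilpotent hM
  let _ := (QuotientGroup.isCyclic_of_isCoatom hM).commGroup
  simpa using Abelianization.commutator_subset_ker (QuotientGroup.mk' M)

theorem QuotientGroup.mk_conj_mul_of_mem_frattini [Group.IsNilpotent G] {t : G}
    (ht : t ∈ frattini G) (g x : G) : ((g⁻¹ * (x * t) * g : G) : G ⧸ frattini G) = x := by
  have ht1 : (t : G ⧸ frattini G) = 1 := (QuotientGroup.eq_one_iff t).mpr ht
  have hc : Commute (g : G ⧸ frattini G) x := by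
    rw [← commutatorElement_eq_one_iff_commute, ← QuotientGroup.mk'_apply,
      ← QuotientGroup.mk'_apply, ← map_commutatorElement, QuotientGroup.mk'_apply,
      QuotientGroup.eq_one_iff]
    exact commutator_le_frattini (commutator_mem_commutator (mem_top g) (mem_top x))
  simp [ht1, hc.inv_left.eq]

end Frattini

theorem zpowers_le_of_inf_ne_bot {G : Type*} [Group G] {a : G} (ha : (orderOf a).Prime)
    {H : Subgroup G} (hne : zpowers a ⊓ H ≠ ⊥) : zpowers a ≤ H := by
  have : Fact (Nat.card (zpowers a)).Prime := ⟨Nat.card_zpowers a ▸ ha⟩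
  rcases eq_bot_or_eq_top_of_prime_card (H.subgroupOf (zpowers a)) with h | h
  · exact absurd (disjoint_iff.mp (disjoint_comm.mp (subgroupOf_eq_bot.mp h))) hne
  · exact subgroupOf_eq_top.mp h

theorem IsPGroup.eq_of_map_eq_of_zpowers_inf_ne_bot {G Q : Type*} [Group G] [Group Q]
    [Finite G] {p : ℕ} [Fact p.Prime] (hG : IsPGroup p G) (f : G →* Q) {a b : G}
    (ha : orderOf a = p) (hfa : f a ≠ 1) (hab : f a = f b)
    (hne : zpowers a ⊓ zpowers b ≠ ⊥) : a = b := by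
  have hfa' : orderOf (f a) = p :=
    orderOf_eq_prime (by rw [← map_pow, ← ha, pow_orderOf_eq_one, map_one]) hfa
  have hle : zpowers a ≤ zpowers b := zpowers_le_of_inf_ne_bot (ha ▸ Fact.out) hne
  obtain ⟨k, hk⟩ : ∃ k : ℕ, b ^ k = a :=
    mem_powers_iff_mem_zpowers.mpr (hle (mem_zpowers a))
  have hk1 : k ≡ 1 [MOD p] :=
    hfa' ▸ pow_eq_pow_iff_modEq.mp (by rw [pow_one, hab, ← map_pow, hk, hab])
  -- `k` is prime to the `p`-power `orderOf b`, so `a = b ^ k` has the order of `b`.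
  have hob : orderOf b = p := by
    obtain ⟨m, hm⟩ := IsPGroup.iff_orderOf.mp hG b
    have hkp : Nat.Coprime k p := by simpa [Nat.Coprime] using hk1.gcd_eq
    rw [← (hm ▸ hkp.symm.pow_left m : (orderOf b).Coprime k).orderOf_pow, hk, ha]
  have heq : zpowers a = zpowers b :=
    eq_of_le_of_card_ge hle (by rw [Nat.card_zpowers, Nat.card_zpowers, ha, hob])
  obtain ⟨j, hj⟩ : ∃ j : ℕ, a ^ j = b :=
    mem_powers_iff_mem_zpowers.mpr (heq ▸ mem_zpowers b)
  have hj1 : j ≡ 1 [MOD p] :=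
    hfa' ▸ pow_eq_pow_iff_modEq.mp (by rw [pow_one, ← map_pow, hj, hab])
  have haj : a ^ j = a ^ 1 := pow_eq_pow_iff_modEq.mpr (ha ▸ hj1)
  rw [← hj, haj, pow_one]

/-- Let `G` be a finite `p`-group and `x ∈ G \ Φ(G)` of order `p`. If `t ∈ Φ(G)` is not
of the form `[x,g] = x⁻¹g⁻¹xg` for any `g ∈ G`, then any conjugate of `⟨x⟩` meets any
conjugate of `⟨xt⟩` trivially (note `⟨x⟩^g = ⟨g⁻¹ x g⟩`). -/
theorem conj_zpowers_inter_trivial_of_not_commutator (p : ℕ) (hp : p.Prime)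
    {G : Type*} [Group G] [Finite G] (hG : IsPGroup p G)
    (x : G) (hx : x ∉ frattini G) (hox : orderOf x = p)
    (t : G) (ht : t ∈ frattini G) (htc : ∀ g : G, t ≠ x⁻¹ * g⁻¹ * x * g) :
    ∀ g h : G,
      Subgroup.zpowers (g⁻¹ * x * g) ⊓ Subgroup.zpowers (h⁻¹ * (x * t) * h) = ⊥ := by
  have : Fact p.Prime := ⟨hp⟩
  have := hG.isNilpotent
  intro g h
  by_contra hne
  let π := QuotientGroup.mk' (frattini G)
  have hπa : π (g⁻¹ * x * g) = π x := by
    have hmk := QuotientGroup.mk_conj_mul_of_mem_frattini (one_mem _) g x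
    rwa [mul_one] at hmk
  have hπb : π (h⁻¹ * (x * t) * h) = π x := QuotientGroup.mk_conj_mul_of_mem_frattini ht h x
  have hoa : orderOf (g⁻¹ * x * g) = p := by
    simpa [hox] using (MulAut.conj g⁻¹).orderOf_eq x
  have hba := hG.eq_of_map_eq_of_zpowers_inf_ne_bot π hoa
    (hπa ▸ mt (QuotientGroup.eq_one_iff x).mp hx) (hπa.trans hπb.symm) hne
  have hxt : x * t = h * (g⁻¹ * x * g) * h⁻¹ := by rw [hba]; group
  refine htc (g * h⁻¹) ?_
  calc t = x⁻¹ * (x * t) := by group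
    _ = x⁻¹ * (g * h⁻¹)⁻¹ * x * (g * h⁻¹) := by rw [hxt]; group
end
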